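/- arXiv:1107.5022 — 2 statements merged into one kernel-verified Lean document; each statement's English description precedes it below -/
import Mathlib

section
/- If α < ω₂ and every ω₁-Borel subset of 2^ω belongs to ⋃_{β<α} Π*(β), then there exists β < α with Π*(β) = Σ*(β); that is, a bounded ω₁-Borel hierarchy must have a top class. -/
open Cardinal Set

abbrev CantorSp : Type := ℕ → Bool
abbrev W1 : Type := (Cardinal.aleph 1).ord.ToType
abbrev Big : Type := W1 → Bool

/-- The pair (Σ*(α), Π*(α)) of classes of the ι-indexed Borel hierarchy on X:
level 0 is the clopen sets, Σ*(α) consists of ι-indexed unions of sets from Π*(β), β < α,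
and Π*(α) consists of ι-indexed intersections of sets from Σ*(β), β < α. -/
noncomputable def SigPi (X : Type) [TopologicalSpace X] (ι : Type) :
    Ordinal → Set (Set X) × Set (Set X) :=
  WellFounded.fix (wellFounded_lt (α := Ordinal)) fun α ih =>
    if α = 0 then ({S | IsClopen S}, {S | IsClopen S})
    else
      ({S | ∃ A : ι → Set X, (∀ i, ∃ β, ∃ h : β < α, A i ∈ (ih β h).2) ∧ S = ⋃ i, A i},
       {S | ∃ A : ι → Set X, (∀ i, ∃ β, ∃ h : β < α, A i ∈ (ih β h).1) ∧ S = ⋂ i, A i})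

noncomputable def SigmaStar (X : Type) [TopologicalSpace X] (ι : Type) (α : Ordinal) :
    Set (Set X) := (SigPi X ι α).1

noncomputable def PiStar (X : Type) [TopologicalSpace X] (ι : Type) (α : Ordinal) :
    Set (Set X) := (SigPi X ι α).2


/-- The ω₁-Borel subsets of Cantor space: the smallest family containing the clopen sets and
closed under ω₁-unions and ω₁-intersections. -/
inductive OmegaOneBorel : Set CantorSp → Prop
  | clopen {S : Set CantorSp} : IsClopen S → OmegaOneBorel S
  | iUnion (A : W1 → Set CantorSp) : (∀ i, OmegaOneBorel (A i)) → OmegaOneBorel (⋃ i, A i)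
  | iInter (A : W1 → Set CantorSp) : (∀ i, OmegaOneBorel (A i)) → OmegaOneBorel (⋂ i, A i)

/-!
Suppose no class `Π*(β)`, `β < α`, is self-dual. Then for each `β < α` some ω₁-Borel set `B β`
is not in `Π*(β)`, since `Π*(β)` would otherwise contain the complement of each of its members.
As `|α| ≤ ℵ₁`, the sets `B β` can be indexed by `ω₁`, and, choosing distinct points `x β` of
Cantor space, glued into the single ω₁-Borel set `J = ⋃ β, {z | evens z = x β, odds z ∈ B β}`.
Then `J ∈ Π*(γ)` for some `γ < α`, and `B γ` is the preimage of `J` under the continuous map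
`y ↦ interleave (x γ) y`, so `B γ ∈ Π*(γ)`, a contradiction.
-/

lemma Cardinal.exists_surjective_of_lift_mk_le.{u, v} {α : Type u} {β : Type v} [Nonempty α]
    (h : lift.{v} #α ≤ lift.{u} #β) : ∃ f : β → α, Function.Surjective f := by
  obtain ⟨e⟩ := lift_mk_le'.1 h
  exact ⟨Function.invFun e, Function.invFun_surjective e.injective⟩

lemma Ordinal.card_le_aleph_one_of_lt_ord_aleph_two {α : Ordinal} (hα : α < (ℵ_ 2).ord) :
    α.card ≤ ℵ_ 1 := by
  rwa [← Order.lt_succ_iff, succ_aleph, one_add_one_eq_two, ← lt_ord]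

section Hierarchy

variable {X : Type} [TopologicalSpace X] {ι : Type}

lemma sigPi_eq (α : Ordinal) :
    SigPi X ι α =
      if α = 0 then ({S | IsClopen S}, {S | IsClopen S})
      else
        ({S | ∃ A : ι → Set X, (∀ i, ∃ β, ∃ _ : β < α, A i ∈ PiStar X ι β) ∧ S = ⋃ i, A i},
         {S | ∃ A : ι → Set X, (∀ i, ∃ β, ∃ _ : β < α, A i ∈ SigmaStar X ι β) ∧ S = ⋂ i, A i}) := by
  rw [SigPi, WellFounded.fix_eq]
  rfl

lemma sigmaStar_zero : SigmaStar X ι 0 = {S | IsClopen S} := by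
  rw [SigmaStar, sigPi_eq, if_pos rfl]

lemma piStar_zero : PiStar X ι 0 = {S | IsClopen S} := by
  rw [PiStar, sigPi_eq, if_pos rfl]

lemma mem_sigmaStar_iff {α : Ordinal} (hα : α ≠ 0) {S : Set X} :
    S ∈ SigmaStar X ι α ↔
      ∃ A : ι → Set X, (∀ i, ∃ β < α, A i ∈ PiStar X ι β) ∧ S = ⋃ i, A i := by
  rw [SigmaStar, sigPi_eq, if_neg hα]
  simp only [exists_prop]
  rfl

lemma mem_piStar_iff {α : Ordinal} (hα : α ≠ 0) {S : Set X} :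
    S ∈ PiStar X ι α ↔
      ∃ A : ι → Set X, (∀ i, ∃ β < α, A i ∈ SigmaStar X ι β) ∧ S = ⋂ i, A i := by
  rw [PiStar, sigPi_eq, if_neg hα]
  simp only [exists_prop]
  rfl

lemma compl_mem_piStar_and_compl_mem_sigmaStar (α : Ordinal) :
    (∀ S ∈ SigmaStar X ι α, Sᶜ ∈ PiStar X ι α) ∧
      (∀ S ∈ PiStar X ι α, Sᶜ ∈ SigmaStar X ι α) := by
  induction α using WellFoundedLT.induction with
  | _ α IH =>
    rcases eq_or_ne α 0 with rfl | hα
    · rw [sigmaStar_zero, piStar_zero]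
      exact ⟨fun S hS => hS.compl, fun S hS => hS.compl⟩
    constructor
    · rintro _ hS
      obtain ⟨A, hA, rfl⟩ := (mem_sigmaStar_iff hα).1 hS
      refine (mem_piStar_iff hα).2 ⟨fun i => (A i)ᶜ, fun i => ?_, compl_iUnion A⟩
      obtain ⟨β, hβ, hAi⟩ := hA i
      exact ⟨β, hβ, (IH β hβ).2 _ hAi⟩
    · rintro _ hS
      obtain ⟨A, hA, rfl⟩ := (mem_piStar_iff hα).1 hS
      refine (mem_sigmaStar_iff hα).2 ⟨fun i => (A i)ᶜ, fun i => ?_, compl_iInter A⟩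
      obtain ⟨β, hβ, hAi⟩ := hA i
      exact ⟨β, hβ, (IH β hβ).1 _ hAi⟩

lemma preimage_mem_sigmaStar_and_preimage_mem_piStar {Y : Type} [TopologicalSpace Y]
    {f : Y → X} (hf : Continuous f) (α : Ordinal) :
    (∀ S ∈ SigmaStar X ι α, f ⁻¹' S ∈ SigmaStar Y ι α) ∧
      (∀ S ∈ PiStar X ι α, f ⁻¹' S ∈ PiStar Y ι α) := by
  induction α using WellFoundedLT.induction with
  | _ α IH =>
    rcases eq_or_ne α 0 with rfl | hα
    · simp only [sigmaStar_zero, piStar_zero]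
      exact ⟨fun S hS => IsClopen.preimage hS hf, fun S hS => IsClopen.preimage hS hf⟩
    constructor
    · rintro _ hS
      obtain ⟨A, hA, rfl⟩ := (mem_sigmaStar_iff hα).1 hS
      refine (mem_sigmaStar_iff hα).2 ⟨fun i => f ⁻¹' A i, fun i => ?_, preimage_iUnion⟩
      obtain ⟨β, hβ, hAi⟩ := hA i
      exact ⟨β, hβ, (IH β hβ).2 _ hAi⟩
    · rintro _ hS
      obtain ⟨A, hA, rfl⟩ := (mem_piStar_iff hα).1 hS
      refine (mem_piStar_iff hα).2 ⟨fun i => f ⁻¹' A i, fun i => ?_, preimage_iInter⟩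
      obtain ⟨β, hβ, hAi⟩ := hA i
      exact ⟨β, hβ, (IH β hβ).1 _ hAi⟩

end Hierarchy

namespace OmegaOneBorel

lemma iInter_of_mk_le {κ : Type} [Nonempty κ] (hκ : #κ ≤ ℵ_ 1) {A : κ → Set CantorSp}
    (hA : ∀ k, OmegaOneBorel (A k)) : OmegaOneBorel (⋂ k, A k) := by
  obtain ⟨g, hg⟩ := exists_surjective_of_lift_mk_le.{0, 0} (α := κ) (β := W1)
    (by simpa [mk_ord_toType] using hκ)
  rw [← hg.iInter_comp]
  exact iInter _ fun w => hA (g w)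

lemma inter {A B : Set CantorSp} (hA : OmegaOneBorel A) (hB : OmegaOneBorel B) :
    OmegaOneBorel (A ∩ B) := by
  rw [inter_eq_iInter]
  refine iInter_of_mk_le (mk_le_aleph0.trans (aleph0_le_aleph 1)) ?_
  rintro (_ | _) <;> assumption

lemma singleton (x : CantorSp) : OmegaOneBorel {x} := by
  have hx : ({x} : Set CantorSp) = ⋂ n, (fun y : CantorSp => y n) ⁻¹' {x n} := by
    ext y
    simp [funext_iff]
  rw [hx]
  exact iInter_of_mk_le (mk_le_aleph0.trans (aleph0_le_aleph 1)) fun n =>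
    clopen ((isClopen_discrete _).preimage (continuous_apply n))

lemma preimage {f : CantorSp → CantorSp} (hf : Continuous f) {S : Set CantorSp}
    (hS : OmegaOneBorel S) : OmegaOneBorel (f ⁻¹' S) := by
  induction hS with
  | clopen h => exact clopen (h.preimage hf)
  | iUnion A _ IH => rw [preimage_iUnion]; exact iUnion _ IH
  | iInter A _ IH => rw [preimage_iInter]; exact iInter _ IH

lemma of_mem_sigmaStar_and_of_mem_piStar (α : Ordinal) :
    (∀ S ∈ SigmaStar CantorSp W1 α, OmegaOneBorel S) ∧
      (∀ S ∈ PiStar CantorSp W1 α, OmegaOneBorel S) := by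
  induction α using WellFoundedLT.induction with
  | _ α IH =>
    rcases eq_or_ne α 0 with rfl | hα
    · rw [sigmaStar_zero, piStar_zero]
      exact ⟨fun S hS => clopen hS, fun S hS => clopen hS⟩
    constructor
    · rintro _ hS
      obtain ⟨A, hA, rfl⟩ := (mem_sigmaStar_iff hα).1 hS
      exact iUnion _ fun i => by obtain ⟨β, hβ, hAi⟩ := hA i; exact (IH β hβ).2 _ hAi
    · rintro _ hS
      obtain ⟨A, hA, rfl⟩ := (mem_piStar_iff hα).1 hS
      exact iInter _ fun i => by obtain ⟨β, hβ, hAi⟩ := hA i; exact (IH β hβ).1 _ hAi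

end OmegaOneBorel

lemma piStar_eq_sigmaStar_of_forall_mem {β : Ordinal}
    (h : ∀ B, OmegaOneBorel B → B ∈ PiStar CantorSp W1 β) :
    PiStar CantorSp W1 β = SigmaStar CantorSp W1 β := by
  have hcompl := compl_mem_piStar_and_compl_mem_sigmaStar (X := CantorSp) (ι := W1) β
  have hborel := OmegaOneBorel.of_mem_sigmaStar_and_of_mem_piStar β
  refine Subset.antisymm (fun S hS => ?_) fun S hS => h S (hborel.1 S hS)
  simpa using hcompl.2 _ (h _ (hborel.1 _ (hcompl.2 S hS)))

def evens (z : CantorSp) : CantorSp := fun n => z (2 * n)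

def odds (z : CantorSp) : CantorSp := fun n => z (2 * n + 1)

def interleave (x y : CantorSp) : CantorSp := fun m => if m % 2 = 0 then x (m / 2) else y (m / 2)

lemma continuous_evens : Continuous evens :=
  continuous_pi fun n => continuous_apply (2 * n)

lemma continuous_odds : Continuous odds :=
  continuous_pi fun n => continuous_apply (2 * n + 1)

lemma continuous_interleave (x : CantorSp) : Continuous (interleave x) :=
  continuous_pi fun m => by
    unfold interleave
    split_ifs
    exacts [continuous_const, continuous_apply _]

@[simp]
lemma evens_interleave (x y : CantorSp) : evens (interleave x y) = x := by
  funext n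
  simp [evens, interleave]

@[simp]
lemma odds_interleave (x y : CantorSp) : odds (interleave x y) = y := by
  funext n
  simp [odds, interleave, Nat.add_mod, Nat.add_div]

def glue {ι : Type} (x : ι → CantorSp) (B : ι → Set CantorSp) : Set CantorSp :=
  ⋃ i, evens ⁻¹' {x i} ∩ odds ⁻¹' B i

lemma preimage_interleave_glue {ι : Type} {x : ι → CantorSp} (hx : Function.Injective x)
    (B : ι → Set CantorSp) (i : ι) : interleave (x i) ⁻¹' glue x B = B i := by
  ext y
  simp [glue, hx.eq_iff]

lemma OmegaOneBorel.glue (x : W1 → CantorSp) {B : W1 → Set CantorSp}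
    (hB : ∀ i, OmegaOneBorel (B i)) : OmegaOneBorel (glue x B) :=
  iUnion _ fun i =>
    ((singleton (x i)).preimage continuous_evens).inter ((hB i).preimage continuous_odds)

/-- A bounded ω₁-Borel hierarchy has a top class: if `α < ω₂` and every ω₁-Borel set is in
`⋃_{β<α} Π*(β)` then `Π*(β) = Σ*(β)` for some `β < α`. -/
theorem bounded_hierarchy_top_class (α : Ordinal) (hα : α < (Cardinal.aleph 2).ord)
    (h : ∀ B : Set CantorSp, OmegaOneBorel B → ∃ β < α, B ∈ PiStar CantorSp W1 β) :
    ∃ β < α, PiStar CantorSp W1 β = SigmaStar CantorSp W1 β := by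
  by_contra! hc
  obtain ⟨β₀, hβ₀, -⟩ := h ∅ (.clopen isClopen_empty)
  have : Nonempty (Iio α) := ⟨⟨β₀, hβ₀⟩⟩
  obtain ⟨f, hf⟩ := exists_surjective_of_lift_mk_le (α := Iio α) (β := W1) <| by
    rw [mk_Iio_ordinal, mk_ord_toType]
    simpa [← Ordinal.lift_card] using Ordinal.card_le_aleph_one_of_lt_ord_aleph_two hα
  have hhigh (w : W1) : ∃ B, OmegaOneBorel B ∧ B ∉ PiStar CantorSp W1 (f w) := by
    by_contra! hall
    exact hc _ (f w).2 (piStar_eq_sigmaStar_of_forall_mem hall)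
  choose B hB hBf using hhigh
  obtain ⟨x⟩ : Nonempty (W1 ↪ CantorSp) := by
    rw [← le_def, mk_ord_toType, mk_arrow, mk_bool, mk_nat]
    simpa using aleph_one_le_continuum
  obtain ⟨γ, hγ, hglue⟩ := h _ (OmegaOneBorel.glue x hB)
  obtain ⟨w, hw⟩ := hf ⟨γ, hγ⟩
  refine hBf w ?_
  rw [← preimage_interleave_glue x.injective B w, hw]
  exact (preimage_mem_sigmaStar_and_preimage_mem_piStar (continuous_interleave _) γ).2 _ hglue
end

section
/- Any nonmeager subset X ⊆ 2^ω of cardinality ℵ₁ is a union of ℵ₁ closed sets (indeed of ℵ₁ singletons) but is not an intersection of ℵ₁ open sets, provided 2^ω is not the union of ℵ₁ meager sets (e.g., in the Cohen real model). -/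
open Cardinal Set

/-!
If `X = ⋂ i, U i` with `U i` open, then `X` is dense in the nonempty open set
`V = interior (closure X)`, so every `closure X \ U i` is nowhere dense. Hence `V` is covered by
`ℵ₁` meagre sets: the singletons of `X` and the sets `closure X \ U i`. Finitely many translates
of `V` cover the compact group `2^ω` (under pointwise xor), which is then a union of `ℵ₁` meagre
sets, against the hypothesis.
-/

open Topology

universe u

theorem exists_iUnion_eq_of_mk_le {α : Type*} {J ι : Type u} (P : Set α → Prop) (hP : P ∅)
    (A : J → Set α) (hA : ∀ j, P (A j)) (hJ : #J ≤ #ι) :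
    ∃ B : ι → Set α, (∀ i, P (B i)) ∧ ⋃ i, B i = ⋃ j, A j := by
  obtain ⟨f⟩ := hJ
  refine ⟨Function.extend f A ⊥, fun i => ?_, iSup_extend_bot f.injective A⟩
  by_cases hi : ∃ j, f j = i
  · obtain ⟨j, rfl⟩ := hi
    rw [f.injective.extend_apply]
    exact hA j
  · rwa [Function.extend_apply' _ _ _ hi]

theorem Pi.nhdsNE_neBot {ι : Type*} {π : ι → Type*} [∀ i, TopologicalSpace (π i)] [Infinite ι]
    [∀ i, Nontrivial (π i)] (x : ∀ i, π i) : (𝓝[≠] x).NeBot := by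
  classical
  rw [← mem_closure_iff_nhdsWithin_neBot, mem_closure_iff_nhds]
  intro s hs
  rw [nhds_pi, Filter.mem_pi] at hs
  obtain ⟨I, hI, u, hu, hus⟩ := hs
  obtain ⟨k, hk⟩ := hI.infinite_compl.nonempty
  obtain ⟨a, ha⟩ := exists_ne (x k)
  refine ⟨Function.update x k a, hus fun i hi => ?_, fun h => ha (by simpa using congrFun h k)⟩
  rw [Function.update_of_ne (ne_of_mem_of_not_mem hi hk)]
  exact mem_of_mem_nhds (hu i)

theorem Pi.isNowhereDense_singleton {ι : Type*} {π : ι → Type*} [∀ i, TopologicalSpace (π i)]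
    [∀ i, T1Space (π i)] [Infinite ι] [∀ i, Nontrivial (π i)] (x : ∀ i, π i) :
    IsNowhereDense {x} :=
  have := Pi.nhdsNE_neBot x
  isClosed_singleton.isNowhereDense_iff.2 (interior_singleton x)

section

variable {α : Type*} [TopologicalSpace α]

theorem isNowhereDense_closure_diff {X U : Set α} (hU : IsOpen U) (hXU : X ⊆ U) :
    IsNowhereDense (closure X \ U) := by
  refine (isClosed_closure.sdiff hU).isNowhereDense_iff.2 (eq_empty_of_forall_notMem fun z hz => ?_)
  obtain ⟨w, hwW, hwX⟩ := mem_closure_iff.1 (interior_subset hz).1 _ isOpen_interior hz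
  exact (interior_subset hwW).2 (hXU hwX)

theorem exists_isOpen_subset_iUnion_isMeagre_of_eq_iInter {ι : Type*} {X : Set α}
    {U : ι → Set α} (hU : ∀ i, IsOpen (U i)) (hXU : X = ⋂ i, U i) (hX : ¬IsMeagre X)
    (hpt : ∀ x : α, IsMeagre {x}) :
    ∃ V, IsOpen V ∧ V.Nonempty ∧
      ∃ A : X ⊕ ι → Set α, (∀ j, IsMeagre (A j)) ∧ V ⊆ ⋃ j, A j := by
  refine ⟨interior (closure X), isOpen_interior,
    nonempty_iff_ne_empty.2 fun h => hX (IsNowhereDense.isMeagre h),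
    Sum.elim (fun x => {x.1}) (fun i => closure X \ U i), ?_, fun y hy => ?_⟩
  · rintro (x | i)
    · exact hpt x
    · exact (isNowhereDense_closure_diff (hU i) (hXU ▸ iInter_subset U i)).isMeagre
  · by_cases hyX : y ∈ X
    · exact mem_iUnion.2 ⟨.inl ⟨y, hyX⟩, rfl⟩
    · obtain ⟨i, hi⟩ : ∃ i, y ∉ U i := by simpa [hXU] using hyX
      exact mem_iUnion.2 ⟨.inr i, interior_subset hy, hi⟩

end

theorem exists_iUnion_isMeagre_eq_univ_of_subset {G J : Type*} [AddGroup G] [TopologicalSpace G]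
    [IsTopologicalAddGroup G] [CompactSpace G] {V : Set G} (hV : IsOpen V) (hne : V.Nonempty)
    {A : J → Set G} (hA : ∀ j, IsMeagre (A j)) (hVA : V ⊆ ⋃ j, A j) :
    ∃ t : Finset G, ∃ B : t × J → Set G, (∀ p, IsMeagre (B p)) ∧ ⋃ p, B p = Set.univ := by
  obtain ⟨t, ht⟩ := compact_covered_by_add_left_translates isCompact_univ (hV.interior_eq ▸ hne)
  refine ⟨t, fun p => (p.1 + ·) ⁻¹' A p.2, fun p => (hA p.2).preimage_of_isOpenMap
    (continuous_const_add _) (isOpenMap_add_left _), eq_univ_of_univ_subset fun y hy => ?_⟩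
  obtain ⟨g, hg, hgy⟩ := mem_iUnion₂.1 (ht hy)
  obtain ⟨j, hj⟩ := mem_iUnion.1 (hVA hgy)
  exact mem_iUnion.2 ⟨(⟨g, hg⟩, j), hj⟩

theorem mk_W1 : #W1 = aleph 1 := by
  rw [mk_toType, card_ord]

/-- If Cantor space is not a union of ℵ₁ meager sets (as in the Cohen real model), then every
nonmeager set of size ℵ₁ is a union of ℵ₁ closed sets but not an intersection of ℵ₁ open
sets. -/
theorem nonmeager_sigma_not_pi
    (hcov : ¬ ∃ A : W1 → Set CantorSp, (∀ i, IsMeagre (A i)) ∧ ⋃ i, A i = Set.univ)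
    (X : Set CantorSp) (hX : ¬ IsMeagre X) (hcard : #X = Cardinal.aleph 1) :
    (∃ A : W1 → Set CantorSp, (∀ i, IsClosed (A i)) ∧ X = ⋃ i, A i) ∧
    ¬ ∃ A : W1 → Set CantorSp, (∀ i, IsOpen (A i)) ∧ X = ⋂ i, A i := by
  constructor
  · obtain ⟨A, hA, hAX⟩ := exists_iUnion_eq_of_mk_le (ι := W1) IsClosed isClosed_empty
      (fun x : X => {x.1}) (fun _ => isClosed_singleton) (by rw [hcard, mk_W1])
    exact ⟨A, hA, by rw [hAX, iUnion_of_singleton_coe]⟩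
  · rintro ⟨U, hU, hXU⟩
    obtain ⟨V, hV, hVne, A, hA, hVA⟩ := exists_isOpen_subset_iUnion_isMeagre_of_eq_iInter hU hXU hX
      fun x => (Pi.isNowhereDense_singleton x).isMeagre
    obtain ⟨t, B, hB, hBuniv⟩ := exists_iUnion_isMeagre_eq_univ_of_subset hV hVne hA hVA
    have hcardB : #(t × (X ⊕ W1)) ≤ #W1 := by
      rw [mk_prod, mk_sum, lift_id, lift_id, lift_id, lift_id, hcard, mk_W1]
      have h0 := aleph0_le_aleph 1
      exact mul_le_of_le h0 ((lt_aleph0_of_finite t).le.trans h0) (add_le_of_le h0 le_rfl le_rfl)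
    obtain ⟨C, hC, hCB⟩ := exists_iUnion_eq_of_mk_le IsMeagre IsMeagre.empty B hB hcardB
    exact hcov ⟨C, hC, hCB.trans hBuniv⟩
end
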